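/- arXiv:math/0506506 — 2 statements merged into one kernel-verified Lean document; each statement's English description precedes it below -/
import Mathlib

section
/- Let f, g, h be smooth functions with assigned weights k, l, m, and define the weighted bracket [f,g] = k f g' − l f' g (of weight k+l+2). Then the Jacobi identity holds: [[f,g], h] + [[g,h], f] + [[h,f], g] = 0, where each outer bracket uses the appropriate weights (k+l+2, m), (l+m+2, k), (m+k+2, l). -/
/-- The first Rankin–Cohen bracket of `f` of weight `k` and `g` of weight `l`. -/
noncomputable def RC1 (k l : ℝ) (f g : ℝ → ℝ) : ℝ → ℝ :=
  fun x => k * f x * deriv g x - l * deriv f x * g x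

lemma deriv_RC1 (k l : ℝ) (f g : ℝ → ℝ)
    (hf : ContDiff ℝ (⊤ : ℕ∞) f) (hg : ContDiff ℝ (⊤ : ℕ∞) g) (x : ℝ) :
    deriv (RC1 k l f g) x =
      k * deriv f x * deriv g x + k * f x * deriv (deriv g) x
        - (l * deriv (deriv f) x * g x + l * deriv f x * deriv g x) := by
  have hfi : ContDiff ℝ ((⊤:ℕ∞) : WithTop ℕ∞) f := hf.of_le (by simp)
  have hgi : ContDiff ℝ ((⊤:ℕ∞) : WithTop ℕ∞) g := hg.of_le (by simp)
  have hf' : ContDiff ℝ ((⊤:ℕ∞) : WithTop ℕ∞) (deriv f) := (contDiff_infty_iff_deriv.mp hfi).2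
  have hg' : ContDiff ℝ ((⊤:ℕ∞) : WithTop ℕ∞) (deriv g) := (contDiff_infty_iff_deriv.mp hgi).2
  have one_le : (1 : WithTop ℕ∞) ≤ ((⊤:ℕ∞) : WithTop ℕ∞) := by
    exact_mod_cast le_top
  have df := (hfi.differentiable (by simp)).differentiableAt (x := x)
  have dg := (hgi.differentiable (by simp)).differentiableAt (x := x)
  have df' := (hf'.differentiable (by simp)).differentiableAt (x := x)
  have dg' := (hg'.differentiable (by simp)).differentiableAt (x := x)
  unfold RC1
  rw [deriv_fun_sub (((differentiableAt_const _).fun_mul df).fun_mul dg')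
        (((differentiableAt_const _).fun_mul df').fun_mul dg),
      deriv_fun_mul ((differentiableAt_const _).fun_mul df) dg',
      deriv_fun_mul ((differentiableAt_const _).fun_mul df') dg,
      deriv_const_mul _ df, deriv_const_mul _ df']

theorem RC1_jacobi (k l m : ℝ) (f g h : ℝ → ℝ)
    (hf : ContDiff ℝ (⊤ : ℕ∞) f) (hg : ContDiff ℝ (⊤ : ℕ∞) g) (hh : ContDiff ℝ (⊤ : ℕ∞) h) :
    ∀ x, RC1 (k + l + 2) m (RC1 k l f g) h x
        + RC1 (l + m + 2) k (RC1 l m g h) f x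
        + RC1 (m + k + 2) l (RC1 m k h f) g x = 0 := by
  intro x
  simp only [RC1, deriv_RC1 k l f g hf hg, deriv_RC1 l m g h hg hh,
    deriv_RC1 m k h f hh hf]
  ring
end

section
/- Let φ be smooth with φ' > 0 on an interval, and let Φ(x₁,x₂) = (φ(x₁), x₂/φ'(x₁)) act on I × ℝ₊. Let ∇ be the connection with Christoffel data ∇_{∂₁}∂₁ = 0, ∇_{∂₁}∂₂ = ∇_{∂₂}∂₁ = (1/(2x₂))∂₁, ∇_{∂₂}∂₂ = −(1/(2x₂))∂₂. Then the pushforward identity ∇_{Φ_*∂₁}Φ_*∂₁ = Φ_*(∇_{∂₁}∂₁) holds (i.e. the failure term vanishes) if and only if φ satisfies φ'''φ' − (3/2)φ''² = 0; explicitly, ∇_{Φ_*∂₁}Φ_*∂₁ = −((φ'''φ' − (3/2)φ''²)/φ'³)·x₂·∂/∂x̃₂ evaluated at Φ(x₁,x₂). -/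
/-- The lift `Φ(x₁,x₂) = (φ(x₁), x₂/φ'(x₁))`. -/
noncomputable def Phi (φ : ℝ → ℝ) : ℝ × ℝ → ℝ × ℝ :=
  fun p => (φ p.1, p.2 / deriv φ p.1)

/-- The vector field `Φ_* ∂₁` expressed in the source coordinates:
`(Φ_* ∂₁)(Φ p) = W p = DΦ_p (1,0)`. -/
noncomputable def Wfield (φ : ℝ → ℝ) : ℝ × ℝ → ℝ × ℝ :=
  fun p => fderiv ℝ (Phi φ) p (1, 0)

/-- The Christoffel bilinear form of the connection
`∇_{∂₁}∂₁ = 0, ∇_{∂₁}∂₂ = ∇_{∂₂}∂₁ = (1/(2x₂))∂₁, ∇_{∂₂}∂₂ = -(1/(2x₂))∂₂`. -/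
noncomputable def Gam (q : ℝ × ℝ) (v w : ℝ × ℝ) : ℝ × ℝ :=
  ((v.1 * w.2 + v.2 * w.1) / (2 * q.2), -(v.2 * w.2) / (2 * q.2))

/-- `(∇_{Φ_*∂₁} Φ_*∂₁)(Φ p)`, computed via the chain rule: since
`(Φ_*∂₁) ∘ Φ = W` and `W p = DΦ_p(1,0)`, the derivative term is `DW_p (1,0)`. -/
noncomputable def covW (φ : ℝ → ℝ) (p : ℝ × ℝ) : ℝ × ℝ :=
  fderiv ℝ (Wfield φ) p (1, 0) + Gam (Phi φ p) (Wfield φ p) (Wfield φ p)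

private lemma slice_apply (f : ℝ × ℝ → ℝ × ℝ) (p : ℝ × ℝ) (h : DifferentiableAt ℝ f p) :
    fderiv ℝ f p (1, 0) = deriv (fun t => f (t, p.2)) p.1 := by
  have hi : HasDerivAt (fun t : ℝ => (t, p.2)) ((1 : ℝ), (0 : ℝ)) p.1 :=
    (hasDerivAt_id p.1).prodMk (hasDerivAt_const _ _)
  exact (h.hasFDerivAt.comp_hasDerivAt p.1 hi).deriv.symm

private lemma wfield_eq (φ : ℝ → ℝ) (q : ℝ × ℝ)
    (h1 : DifferentiableAt ℝ φ q.1)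
    (h2 : HasDerivAt (deriv φ) (deriv (deriv φ) q.1) q.1)
    (hne : deriv φ q.1 ≠ 0) :
    Wfield φ q = (deriv φ q.1, -(q.2 * deriv (deriv φ) q.1) / (deriv φ q.1) ^ 2) := by
  have hA : DifferentiableAt ℝ (fun p : ℝ × ℝ => φ p.1) q :=
    DifferentiableAt.comp q h1 differentiableAt_fst
  have hB : DifferentiableAt ℝ (fun p : ℝ × ℝ => deriv φ p.1) q :=
    DifferentiableAt.comp q h2.differentiableAt differentiableAt_fst
  have hC : DifferentiableAt ℝ (fun p : ℝ × ℝ => p.2 / deriv φ p.1) q := by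
    simp only [div_eq_mul_inv]
    exact differentiableAt_snd.mul (hB.inv hne)
  have hdiff : DifferentiableAt ℝ (Phi φ) q := hA.prodMk hC
  rw [Wfield, slice_apply _ _ hdiff]
  have hs := h1.hasDerivAt.prodMk ((hasDerivAt_const q.1 q.2).div h2 hne)
  rw [show deriv (fun t => Phi φ (t, q.2)) q.1 = _ from hs.deriv]
  simp only [Prod.mk.injEq]
  exact ⟨trivial, by ring⟩

private lemma covW_formula (a b : ℝ) (φ : ℝ → ℝ)
    (hφ : ContDiffOn ℝ (⊤ : ℕ∞) φ (Set.Ioo a b))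
    (hd : ∀ x ∈ Set.Ioo a b, 0 < deriv φ x)
    (p : ℝ × ℝ) (hp1 : p.1 ∈ Set.Ioo a b) (hp2 : 0 < p.2) :
    covW φ p =
      (0, -((deriv (deriv (deriv φ)) p.1 * deriv φ p.1 -
          (3 / 2) * (deriv (deriv φ) p.1) ^ 2) / (deriv φ p.1) ^ 3) * p.2) := by
  have hop : IsOpen (Set.Ioo a b) := isOpen_Ioo
  have hφ1 : ContDiffOn ℝ (⊤ : ℕ∞) (deriv φ) (Set.Ioo a b) := hφ.deriv_of_isOpen hop (by simp)
  have hφ2 : ContDiffOn ℝ (⊤ : ℕ∞) (deriv (deriv φ)) (Set.Ioo a b) := hφ1.deriv_of_isOpen hop (by simp)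
  have key : ∀ x ∈ Set.Ioo a b, DifferentiableAt ℝ φ x ∧
      HasDerivAt (deriv φ) (deriv (deriv φ) x) x ∧
      HasDerivAt (deriv (deriv φ)) (deriv (deriv (deriv φ)) x) x := by
    intro x hx
    have hm := hop.mem_nhds hx
    refine ⟨(hφ.differentiableOn (by simp)).differentiableAt hm, ?_, ?_⟩
    · exact ((hφ1.differentiableOn (by simp)).differentiableAt hm).hasDerivAt
    · exact ((hφ2.differentiableOn (by simp)).differentiableAt hm).hasDerivAt
  obtain ⟨h1, h2, h3⟩ := key p.1 hp1
  have hne : deriv φ p.1 ≠ 0 := (hd _ hp1).ne'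
  -- the explicit formula for Wfield near p
  set g : ℝ × ℝ → ℝ × ℝ :=
    fun q => (deriv φ q.1, -(q.2 * deriv (deriv φ) q.1) / (deriv φ q.1) ^ 2) with hg
  have heq : Wfield φ =ᶠ[nhds p] g := by
    have h0 : ∀ᶠ q : ℝ × ℝ in nhds p, q.1 ∈ Set.Ioo a b :=
      continuousAt_fst.eventually_mem (hop.mem_nhds hp1)
    filter_upwards [h0] with q hq
    obtain ⟨k1, k2, _⟩ := key q.1 hq
    exact wfield_eq φ q k1 k2 (hd _ hq).ne'
  have hWp : Wfield φ p = (deriv φ p.1, -(p.2 * deriv (deriv φ) p.1) / (deriv φ p.1) ^ 2) :=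
    wfield_eq φ p h1 h2 hne
  have hB : DifferentiableAt ℝ (fun q : ℝ × ℝ => deriv φ q.1) p :=
    DifferentiableAt.comp p h2.differentiableAt differentiableAt_fst
  have hC : DifferentiableAt ℝ (fun q : ℝ × ℝ => deriv (deriv φ) q.1) p :=
    DifferentiableAt.comp p h3.differentiableAt differentiableAt_fst
  have hnum : DifferentiableAt ℝ (fun q : ℝ × ℝ => -(q.2 * deriv (deriv φ) q.1)) p :=
    (differentiableAt_snd.mul hC).neg
  have hden : DifferentiableAt ℝ (fun q : ℝ × ℝ => (deriv φ q.1) ^ 2) p := hB.pow 2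
  have hden' : (deriv φ p.1) ^ 2 ≠ 0 := pow_ne_zero 2 hne
  have hquot : DifferentiableAt ℝ
      (fun q : ℝ × ℝ => -(q.2 * deriv (deriv φ) q.1) / (deriv φ q.1) ^ 2) p := by
    simp only [div_eq_mul_inv]
    exact hnum.mul (hden.inv hden')
  have hgdiff : DifferentiableAt ℝ g p := hB.prodMk hquot
  have hfd : fderiv ℝ (Wfield φ) p (1, 0) = fderiv ℝ g p (1, 0) := by
    rw [heq.fderiv_eq]
  have hs := h2.prodMk ((((hasDerivAt_const p.1 p.2).mul h3).neg).div (h2.pow 2) hden')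
  have hgval := (slice_apply g p hgdiff).trans (show deriv (fun t => g (t, p.2)) p.1 = _ from
    hs.deriv)
  simp only [covW]
  rw [hfd, hgval, hWp]
  simp only [Gam, Phi, Prod.mk_add_mk, Prod.mk.injEq]
  have hp2' : p.2 ≠ 0 := hp2.ne'
  constructor
  · field_simp
    ring
  · push_cast
    simp only [Pi.pow_apply, Pi.mul_apply, Pi.neg_apply]
    field_simp
    ring

theorem connection_invariance_iff_schwarzian (a b : ℝ) (φ : ℝ → ℝ)
    (hφ : ContDiffOn ℝ (⊤ : ℕ∞) φ (Set.Ioo a b))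
    (hd : ∀ x ∈ Set.Ioo a b, 0 < deriv φ x) :
    (∀ p : ℝ × ℝ, p.1 ∈ Set.Ioo a b → 0 < p.2 →
        covW φ p =
          (0, -((deriv (deriv (deriv φ)) p.1 * deriv φ p.1 -
              (3 / 2) * (deriv (deriv φ) p.1) ^ 2) / (deriv φ p.1) ^ 3) * p.2)) ∧
    ((∀ p : ℝ × ℝ, p.1 ∈ Set.Ioo a b → 0 < p.2 → covW φ p = 0) ↔
      ∀ x ∈ Set.Ioo a b,
        deriv (deriv (deriv φ)) x * deriv φ x - (3 / 2) * (deriv (deriv φ) x) ^ 2 = 0) := by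
  refine ⟨covW_formula a b φ hφ hd, ?_, ?_⟩
  · intro h x hx
    have h1 := h (x, 1) hx one_pos
    rw [covW_formula a b φ hφ hd (x, 1) hx one_pos] at h1
    have hne : deriv φ x ≠ 0 := (hd _ hx).ne'
    have h3 : (deriv (deriv (deriv φ)) x * deriv φ x -
        3 / 2 * deriv (deriv φ) x ^ 2) / (deriv φ x) ^ 3 = 0 := by
      have h2 := congrArg Prod.snd h1
      simp only [Prod.snd_zero, mul_one, neg_eq_zero] at h2
      exact h2
    field_simp at h3
    linarith [h3]
  · intro h p hp1 hp2
    rw [covW_formula a b φ hφ hd p hp1 hp2, h p.1 hp1]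
    norm_num
end
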